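/- arXiv:2301.12964 — 2 statements merged into one kernel-verified Lean document; each statement's English description precedes it below -/
import Mathlib

section
/- If every P-position in ABO-delete Nim is characterized by condition (*) (each heap size has remainder between 1 and n−1 mod n(n−1)), then no option of a position satisfying (*) satisfies (*): that is, if z₁,…,z_n are positive integers each with remainder in [1, n−1] mod n(n−1), and z′₁,…,z′_n are positive integers each with remainder in [1, n−1] mod n(n−1), then z′₁ + ⋯ + z′_n ≠ z_i for every i. -/
/-- A positive integer `x` satisfies (*) for `n` if its remainder modulo
`n * (n - 1)` lies between `1` and `n - 1` (inclusive). -/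
def Oddoid (n x : ℕ) : Prop :=
  1 ≤ x % (n * (n - 1)) ∧ x % (n * (n - 1)) ≤ n - 1

theorem stmt9 (n : ℕ) (hn : 2 ≤ n) (z z' : Fin n → ℕ)
    (hz : ∀ i, Oddoid n (z i)) (hz' : ∀ i, Oddoid n (z' i)) :
    ∀ i, (∑ j, z' j) ≠ z i := by
  intro i heq
  set N := n * (n - 1) with hN
  obtain ⟨h1, h2⟩ := hz i
  have hsum : (∑ j, z' j) % N = (∑ j, (z' j % N)) % N := Finset.sum_nat_mod _ _ _
  set S := ∑ j, (z' j % N) with hS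
  have hlo : n ≤ S := by
    calc n = ∑ _j : Fin n, 1 := by simp
    _ ≤ S := Finset.sum_le_sum fun j _ => (hz' j).1
  have hhi : S ≤ N := by
    calc S ≤ ∑ _j : Fin n, (n - 1) := Finset.sum_le_sum fun j _ => (hz' j).2
    _ = N := by simp [hN, mul_comm]
  rcases eq_or_lt_of_le hhi with h | h
  · have : (∑ j, z' j) % N = 0 := by rw [hsum, h, Nat.mod_self]
    rw [heq] at this
    rw [← hN] at h1
    omega
  · have : (∑ j, z' j) % N = S := by rw [hsum, Nat.mod_eq_of_lt h]
    rw [heq] at this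
    rw [← hN] at h1 h2
    omega
end

section
/- If m is a positive integer whose remainder modulo n(n−1) is at least n (where remainder 0 is interpreted as n(n−1), i.e., m ≥ n and m does not satisfy (*)), then m can be written as a sum of n positive integers each of whose remainders modulo n(n−1) lies between 1 and n−1. -/
lemma hermite_small (n t : ℕ) (hn : 0 < n) (ht : t < n) :
    ∑ i ∈ Finset.range n, (t + i) / n = t := by
  have hcongr : ∀ i ∈ Finset.range n, (t + i) / n = if n - t ≤ i then 1 else 0 := by
    intro i hi
    simp only [Finset.mem_range] at hi
    rcases le_or_gt (n - t) i with h1 | h1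
    · rw [if_pos h1]
      exact Nat.div_eq_of_lt_le (by omega) (by omega)
    · rw [if_neg (not_le.mpr h1)]
      exact Nat.div_eq_of_lt (by omega)
  rw [Finset.sum_congr rfl hcongr, ← Finset.sum_filter]
  have : (Finset.range n).filter (fun i => n - t ≤ i) = Finset.Ico (n - t) n := by
    ext x; simp [Finset.mem_filter, Finset.mem_Ico, and_comm]
  rw [this]
  simp only [Finset.sum_const, smul_eq_mul, mul_one, Nat.card_Ico]
  omega

lemma hermite (n r : ℕ) (hn : 0 < n) :
    ∑ i ∈ Finset.range n, (r + i) / n = r := by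
  obtain ⟨q, t, ht, rfl⟩ : ∃ q t, t < n ∧ r = n * q + t :=
    ⟨r / n, r % n, Nat.mod_lt _ hn, (Nat.div_add_mod r n).symm⟩
  have : ∀ i ∈ Finset.range n, (n * q + t + i) / n = q + (t + i) / n := by
    intro i _
    rw [add_assoc, Nat.mul_add_div hn]
  rw [Finset.sum_congr rfl this, Finset.sum_add_distrib, hermite_small n t hn ht,
    Finset.sum_const, Finset.card_range, smul_eq_mul]

theorem stmt10 (n m : ℕ) (hn : 2 ≤ n) (hm : 0 < m) (hnm : n ≤ m)
    (h : ¬ Oddoid n m) :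
    ∃ f : Fin n → ℕ, (∀ i, Oddoid n (f i)) ∧ ∑ i, f i = m := by
  unfold Oddoid at h
  push_neg at h
  set N := n * (n - 1) with hN
  have hNsq : N + n = n * n := by
    have h2 : n - 1 + 1 = n := by omega
    calc N + n = n * ((n - 1) + 1) := by rw [hN]; ring
    _ = n * n := by rw [h2]
  have hNn : n ≤ N := by
    have : n * 1 ≤ n * (n - 1) := Nat.mul_le_mul_left n (by omega)
    omega
  have hNpos : 0 < N := by omega
  have hsmallN : n - 1 < N := by
    have : 2 * (n - 1) ≤ n * (n - 1) := Nat.mul_le_mul_right _ hn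
    omega
  set r := m % N with hr
  set s := if r = 0 then N else r with hs
  have hrN : r < N := Nat.mod_lt _ hNpos
  have hsn : n ≤ s := by
    rcases eq_or_ne r 0 with h0 | h0
    · rw [hs, if_pos h0]; exact hNn
    · rw [hs, if_neg h0]
      have := h (by omega)
      omega
  have hsN : s ≤ N := by
    rcases eq_or_ne r 0 with h0 | h0
    · rw [hs, if_pos h0]
    · rw [hs, if_neg h0]; omega
  have hsm : s ≤ m := by
    rcases eq_or_ne r 0 with h0 | h0
    · rw [hs, if_pos h0]
      exact Nat.le_of_dvd hm (Nat.dvd_of_mod_eq_zero h0)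
    · rw [hs, if_neg h0]
      exact Nat.mod_le m N
  have hdvd : N ∣ (m - s) := by
    rcases eq_or_ne r 0 with h0 | h0
    · rw [hs, if_pos h0]
      exact Nat.dvd_sub (Nat.dvd_of_mod_eq_zero h0) dvd_rfl
    · rw [hs, if_neg h0, hr]
      exact Nat.dvd_sub_mod m
  obtain ⟨k, hk⟩ := hdvd
  have hdiv_lb : ∀ i : Fin n, 1 ≤ (s + (i : ℕ)) / n := by
    intro i
    rw [Nat.one_le_div_iff (by omega)]
    omega
  have hdiv_ub : ∀ i : Fin n, (s + (i : ℕ)) / n ≤ n - 1 := by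
    intro i
    have hi : (i : ℕ) < n := i.isLt
    have hlt : (s + (i : ℕ)) / n < n := by
      rw [Nat.div_lt_iff_lt_mul (by omega)]
      omega
    omega
  set z : Fin n := ⟨0, by omega⟩ with hz
  refine ⟨fun i => (s + (i : ℕ)) / n + if i = z then m - s else 0, ?_, ?_⟩
  · intro i
    constructor <;> {
      dsimp only
      rcases eq_or_ne i z with h0 | h0
      · rw [if_pos h0, hk, Nat.add_mul_mod_self_left,
          Nat.mod_eq_of_lt (by have := hdiv_ub i; omega)]
        first
          | exact hdiv_lb i
          | exact hdiv_ub i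
      · rw [if_neg h0, add_zero,
          Nat.mod_eq_of_lt (by have := hdiv_ub i; omega)]
        first
          | exact hdiv_lb i
          | exact hdiv_ub i
    }
  · dsimp only
    rw [Finset.sum_add_distrib, Finset.sum_ite_eq' Finset.univ z (fun _ => m - s)]
    have h1 : ∑ i : Fin n, (s + (i : ℕ)) / n = s := by
      rw [Fin.sum_univ_eq_sum_range (fun i => (s + i) / n) n]
      exact hermite n s (by omega)
    simp only [Finset.mem_univ, if_true]
    rw [h1]
    omega
end
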